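/- Let F_X = (V_X, C_X) and F_Y = (V_Y, C_Y) be minimal unsatisfiable CNF formulas over disjoint sets of variables, let c_0 = z_1 ∨ z_2 ∨ ... ∨ z_k be a clause of C_X consisting of k distinct literals with k ≤ |C_Y|, and let h : C_Y → {z_1, ..., z_k} be any surjective map. Define the formula F_Z over the variables V_X ∪ V_Y with clause set C_Z = (C_X \ {c_0}) ∪ { c_y ∨ h(c_y) : c_y ∈ C_Y }. Then for every c' ∈ C_Y, the formula obtained from F_Z by removing the clause c' ∨ h(c') is satisfiable. -/

import Mathlib

/-- An assignment `a` satisfies a clause if the clause contains a literal `(v, b)` with `a v = b`. -/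
def ClauseSat {V : Type} (a : V → Bool) (c : Finset (V × Bool)) : Prop :=
  ∃ p ∈ c, a p.1 = p.2

/-- An assignment satisfies a CNF formula if it satisfies every clause. -/
def FormulaSat {V : Type} (a : V → Bool) (F : Finset (Finset (V × Bool))) : Prop :=
  ∀ c ∈ F, ClauseSat a c

/-- A CNF formula is satisfiable if some assignment satisfies it. -/
def Satisfiable {V : Type} (F : Finset (Finset (V × Bool))) : Prop :=
  ∃ a : V → Bool, FormulaSat a F

/-- A CNF formula is minimal unsatisfiable if it is unsatisfiable but removing
any single clause yields a satisfiable formula. -/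
def MinimalUnsat {V : Type} [DecidableEq V] (F : Finset (Finset (V × Bool))) : Prop :=
  ¬ Satisfiable F ∧ ∀ c ∈ F, Satisfiable (F.erase c)

/-- A `k`-SAT formula: every clause has exactly `k` literals whose underlying
variables are pairwise distinct. -/
def IsKSat {V : Type} [DecidableEq V] (k : ℕ) (F : Finset (Finset (V × Bool))) : Prop :=
  ∀ c ∈ F, c.card = k ∧ (c.image Prod.fst).card = k

/-- Lift a clause along a renaming of variables. -/
def liftClause {A B : Type} [DecidableEq A] [DecidableEq B] (f : A → B)
    (c : Finset (A × Bool)) : Finset (B × Bool) :=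
  c.image fun p => (f p.1, p.2)

/-- The clause set `C_Z = (C_X \ {c_0}) ∪ { c_y ∨ h(c_y) : c_y ∈ C_Y }`, with the
variables of `F_X` and `F_Y` made disjoint via the sum type `VX ⊕ VY`. -/
def combinedFormula {VX VY : Type} [DecidableEq VX] [DecidableEq VY]
    (CX : Finset (Finset (VX × Bool))) (CY : Finset (Finset (VY × Bool)))
    (c₀ : Finset (VX × Bool)) (h : Finset (VY × Bool) → VX × Bool) :
    Finset (Finset ((VX ⊕ VY) × Bool)) :=
  ((CX.erase c₀).image (liftClause Sum.inl)) ∪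
    (CY.image fun c => insert (Sum.inl (h c).1, (h c).2) (liftClause Sum.inr c))

/-! The minimality of `F_X` gives an assignment of `V_X` satisfying `C_X \ {c₀}`, and that of `F_Y`
one of `V_Y` satisfying `C_Y \ {c'}`. Since the variable sets are disjoint the two combine into a single
assignment, and it satisfies every `c_y ∨ h(c_y)` with `c_y ≠ c'` already through `c_y`. -/

theorem clauseSat_liftClause_iff {A B : Type} [DecidableEq A] [DecidableEq B] (f : A → B)
    (a : B → Bool) (c : Finset (A × Bool)) :
    ClauseSat a (liftClause f c) ↔ ClauseSat (a ∘ f) c :=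
  Finset.exists_mem_image

theorem ClauseSat.mono {V : Type} {a : V → Bool} {c d : Finset (V × Bool)} (hcd : c ⊆ d)
    (hc : ClauseSat a c) : ClauseSat a d :=
  let ⟨p, hp, hap⟩ := hc
  ⟨p, hcd hp, hap⟩

theorem formulaSat_combinedFormula_erase {VX VY : Type} [DecidableEq VX] [DecidableEq VY]
    {CX : Finset (Finset (VX × Bool))} {CY : Finset (Finset (VY × Bool))}
    {c₀ : Finset (VX × Bool)} {h : Finset (VY × Bool) → VX × Bool} {c' : Finset (VY × Bool)}
    {aX : VX → Bool} {aY : VY → Bool}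
    (haX : FormulaSat aX (CX.erase c₀)) (haY : FormulaSat aY (CY.erase c')) :
    FormulaSat (Sum.elim aX aY) ((combinedFormula CX CY c₀ h).erase
      (insert (Sum.inl (h c').1, (h c').2) (liftClause Sum.inr c'))) := by
  intro c hc
  obtain ⟨hne, hc⟩ := Finset.mem_erase.mp hc
  rcases Finset.mem_union.mp hc with hc | hc
  · obtain ⟨cx, hcx, rfl⟩ := Finset.mem_image.mp hc
    rw [clauseSat_liftClause_iff, Sum.elim_comp_inl]
    exact haX cx hcx
  · obtain ⟨cy, hcy, rfl⟩ := Finset.mem_image.mp hc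
    have hcy' : cy ∈ CY.erase c' := Finset.mem_erase.mpr ⟨by rintro rfl; exact hne rfl, hcy⟩
    refine ClauseSat.mono (Finset.subset_insert _ _) ?_
    rw [clauseSat_liftClause_iff, Sum.elim_comp_inr]
    exact haY cy hcy'

theorem combined_erase_new_sat_general {VX VY : Type} [DecidableEq VX] [DecidableEq VY]
    (CX : Finset (Finset (VX × Bool))) (CY : Finset (Finset (VY × Bool)))
    (c₀ : Finset (VX × Bool)) (hc₀ : c₀ ∈ CX)
    (h : Finset (VY × Bool) → VX × Bool)
    (hX : MinimalUnsat CX) (hY : MinimalUnsat CY) :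
    ∀ c' ∈ CY,
      Satisfiable ((combinedFormula CX CY c₀ h).erase
        (insert (Sum.inl (h c').1, (h c').2) (liftClause Sum.inr c'))) := by
  intro c' hc'
  obtain ⟨aX, haX⟩ := hX.2 c₀ hc₀
  obtain ⟨aY, haY⟩ := hY.2 c' hc'
  exact ⟨Sum.elim aX aY, formulaSat_combinedFormula_erase haX haY⟩

theorem combined_erase_new_sat {VX VY : Type} [DecidableEq VX] [DecidableEq VY]
    (CX : Finset (Finset (VX × Bool))) (CY : Finset (Finset (VY × Bool)))
    (c₀ : Finset (VX × Bool)) (hc₀ : c₀ ∈ CX) (k : ℕ) (hk : c₀.card = k)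
    (hkY : k ≤ CY.card)
    (h : Finset (VY × Bool) → VX × Bool)
    (hmem : ∀ c ∈ CY, h c ∈ c₀)
    (hsurj : ∀ z ∈ c₀, ∃ c ∈ CY, h c = z)
    (hX : MinimalUnsat CX) (hY : MinimalUnsat CY) :
    ∀ c' ∈ CY,
      Satisfiable ((combinedFormula CX CY c₀ h).erase
        (insert (Sum.inl (h c').1, (h c').2) (liftClause Sum.inr c'))) :=
  combined_erase_new_sat_general CX CY c₀ hc₀ h hX hY
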